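/- Fix L ≥ 0, c ≥ 1, and unit-norm-bounded vectors v₁, …, v_t ∈ ℝⁿ (‖v_i‖₂ ≤ 1). Define M₀ = 0 and M_i = (I - c⁻¹v_i v_iᵀ)M_{i-1}(I - c⁻¹v_i v_iᵀ) + L v_i v_iᵀ for i ≥ 1. Then 0 ⪯ M_i ⪯ LcI for all i ∈ [t]. -/

import Mathlib

/-!
With `V = w wᵀ` and `P = 1 - c⁻¹ V`, one step is `M ↦ P M P + L V`. It preserves positive
semidefiniteness since `P` is symmetric and `L ≥ 0`. Because `V² = ‖w‖² V`, the same step with the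
smaller weight `L (1 - ‖w‖² / c)` maps `L c I - M` to `L c I - (P M P + L V)`; that weight is
nonnegative when `‖w‖² ≤ c`, so `M ⪯ L c I` is preserved as well. Induct from `M₀ = 0`.
-/

open Matrix

noncomputable def covarUpdate {ι : Type*} [Fintype ι] [DecidableEq ι] (c L : ℝ) (w : ι → ℝ)
    (M : Matrix ι ι ℝ) : Matrix ι ι ℝ :=
  (1 - c⁻¹ • vecMulVec w w) * M * (1 - c⁻¹ • vecMulVec w w) + L • vecMulVec w w

section

variable {ι : Type*} [Fintype ι]

lemma posSemidef_vecMulVec_self (w : ι → ℝ) : (vecMulVec w w).PosSemidef := by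
  simpa using posSemidef_vecMulVec_self_star w

lemma vecMulVec_self_mul_self (w : ι → ℝ) :
    vecMulVec w w * vecMulVec w w = (w ⬝ᵥ w) • vecMulVec w w := by
  rw [vecMulVec_mul_vecMulVec, vecMulVec_smul]

variable [DecidableEq ι]

lemma posSemidef_covarUpdate {M : Matrix ι ι ℝ} (hM : M.PosSemidef) (c : ℝ) {L : ℝ}
    (hL : 0 ≤ L) (w : ι → ℝ) : (covarUpdate c L w M).PosSemidef := by
  have hP : (1 - c⁻¹ • vecMulVec w w)ᴴ = 1 - c⁻¹ • vecMulVec w w := by simp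
  refine .add ?_ ((posSemidef_vecMulVec_self w).smul hL)
  have := hM.mul_mul_conjTranspose_same (1 - c⁻¹ • vecMulVec w w)
  rwa [hP] at this

lemma smul_one_sub_covarUpdate {c : ℝ} (hc : c ≠ 0) (L : ℝ) (w : ι → ℝ) (M : Matrix ι ι ℝ) :
    (L * c) • 1 - covarUpdate c L w M
      = covarUpdate c (L * (1 - c⁻¹ * (w ⬝ᵥ w))) w ((L * c) • 1 - M) := by
  have hcc : c * c⁻¹ = 1 := mul_inv_cancel₀ hc
  simp only [covarUpdate, sub_mul, mul_sub, one_mul, mul_one, smul_mul_assoc, mul_smul_comm,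
    vecMulVec_self_mul_self, smul_smul]
  linear_combination (norm := module) (L * (2 - c⁻¹ * (w ⬝ᵥ w)) * hcc) • vecMulVec w w

lemma posSemidef_smul_one_sub_covarUpdate {c L : ℝ} {M : Matrix ι ι ℝ} {w : ι → ℝ}
    (hM : ((L * c) • 1 - M).PosSemidef) (hc : 0 < c) (hL : 0 ≤ L) (hw : w ⬝ᵥ w ≤ c) :
    ((L * c) • 1 - covarUpdate c L w M).PosSemidef := by
  rw [smul_one_sub_covarUpdate hc.ne']
  have hw' : c⁻¹ * (w ⬝ᵥ w) ≤ 1 := by rwa [inv_mul_le_one₀ hc]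
  exact posSemidef_covarUpdate hM c (mul_nonneg hL (sub_nonneg.2 hw')) w

end

theorem covar_seq_psd_le {n t : ℕ}
    (L c : ℝ) (hc : 1 ≤ c) (hL : 0 ≤ L)
    (v : ℕ → Fin n → ℝ) (hv : ∀ i, ∑ k, v i k ^ 2 ≤ 1)
    (M : ℕ → Matrix (Fin n) (Fin n) ℝ)
    (hM0 : M 0 = 0)
    (hMrec : ∀ i : ℕ,
      M (i + 1) = (1 - c⁻¹ • vecMulVec (v (i + 1)) (v (i + 1))) * M i
          * (1 - c⁻¹ • vecMulVec (v (i + 1)) (v (i + 1)))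
        + L • vecMulVec (v (i + 1)) (v (i + 1))) :
    ∀ i ∈ Finset.Icc 1 t, (M i).PosSemidef ∧
      ((L * c) • (1 : Matrix (Fin n) (Fin n) ℝ) - M i).PosSemidef := by
  have hc0 : 0 < c := by linarith
  have hbounds : ∀ i, (M i).PosSemidef ∧ ((L * c) • 1 - M i).PosSemidef := by
    intro i
    induction i with
    | zero =>
      rw [hM0, sub_zero]
      exact ⟨.zero, PosSemidef.one.smul (mul_nonneg hL hc0.le)⟩
    | succ i ih =>
      have hstep : M (i + 1) = covarUpdate c L (v (i + 1)) (M i) := hMrec i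
      have hw : v (i + 1) ⬝ᵥ v (i + 1) ≤ c := by
        simpa [dotProduct, sq] using (hv (i + 1)).trans hc
      rw [hstep]
      exact ⟨posSemidef_covarUpdate ih.1 c hL _,
        posSemidef_smul_one_sub_covarUpdate ih.2 hc0 hL hw⟩
  exact fun i _ => hbounds i
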